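/- arXiv:2501.17214 — 4 statements merged into one kernel-verified Lean document; each statement's English description precedes it below -/
import Mathlib

section
/- Let n ≥ 2 and let e_n denote the last standard basis vector of ℝ^n. Let ŝ_1, …, ŝ_l ∈ ℝ^n satisfy ⟨ŝ_i, e_n⟩ = 0, let f_1, …, f_l ∈ ℝ, and let c_1, …, c_l > 0 be positive weights. If Σ_{i=1}^{l} c_i f_i = 0 and Σ_{i=1}^{l} c_i f_i (ŝ_i ∧ e_n) = 0, then Σ_{i=1}^{l} c_i f_i ŝ_i = 0 and Σ_{i=1}^{l} c_i (ŝ_i ∧ f_i ŝ_i) = 0; that is, the system of horizontal forces f_i ŝ_i applied at the points ŝ_i is again in equilibrium. -/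
/-! By bilinearity the moment condition says `S ∧ eₙ = 0` for the total horizontal force
`S = ∑ cᵢ fᵢ ŝᵢ`, which is orthogonal to `eₙ`; applying `S ∧ eₙ` to `eₙ` gives back `S`, so
`S = 0`. The horizontal moments vanish termwise, since `ŝᵢ ∧ fᵢ ŝᵢ = fᵢ (ŝᵢ ∧ ŝᵢ) = 0`. -/

open Matrix Real
open scoped RealInnerProductSpace

noncomputable section

abbrev Euc (n : ℕ) : Type := EuclideanSpace ℝ (Fin n)

def wedge {n : ℕ} (v w : Euc n) : Matrix (Fin n) (Fin n) ℝ :=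
  Matrix.of fun p q => v p * w q - w p * v q

def rankOne {n : ℕ} (v : Euc n) : Matrix (Fin n) (Fin n) ℝ :=
  Matrix.of fun p q => v p * v q

section Wedge

variable {n : ℕ}

theorem wedge_self (v : Euc n) : wedge v v = 0 := by
  ext p q
  simp only [wedge, of_apply, Matrix.zero_apply]
  ring

theorem wedge_smul_right (v w : Euc n) (a : ℝ) : wedge v (a • w) = a • wedge v w := by
  ext p q
  simp only [wedge, of_apply, Matrix.smul_apply, PiLp.smul_apply, smul_eq_mul]
  ring

theorem sum_smul_wedge_left {ι : Type*} (s : Finset ι) (a : ι → ℝ) (v : ι → Euc n)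
    (w : Euc n) : ∑ i ∈ s, a i • wedge (v i) w = wedge (∑ i ∈ s, a i • v i) w := by
  ext p q
  simp only [wedge, of_apply, Matrix.sum_apply, Matrix.smul_apply, WithLp.ofLp_sum,
    Finset.sum_apply, PiLp.smul_apply, smul_eq_mul, Finset.sum_mul, Finset.mul_sum,
    ← Finset.sum_sub_distrib]
  refine Finset.sum_congr rfl fun i _ => ?_
  ring

theorem sum_wedge_apply_mul (v w : Euc n) (p : Fin n) :
    ∑ q, wedge v w p q * w q = v p * ‖w‖ ^ 2 - w p * ⟪v, w⟫ := by
  simp only [wedge, of_apply, EuclideanSpace.real_norm_sq_eq, PiLp.inner_apply,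
    RCLike.inner_apply, conj_trivial, Finset.mul_sum, ← Finset.sum_sub_distrib]
  refine Finset.sum_congr rfl fun q _ => ?_
  ring

theorem eq_zero_of_wedge_eq_zero {v w : Euc n} (hw : w ≠ 0) (h : wedge v w = 0)
    (hvw : ⟪v, w⟫ = 0) : v = 0 := by
  ext p
  have hp := sum_wedge_apply_mul v w p
  simp only [h, Matrix.zero_apply, zero_mul, Finset.sum_const_zero, hvw, mul_zero,
    sub_zero] at hp
  have hw2 : ‖w‖ ^ 2 ≠ 0 := by positivity
  simpa [hw2] using hp.symm

end Wedge

/-- If the vertical forces `fᵢ eₙ` applied at points `ŝᵢ` of the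
hyperplane `{⟪x, eₙ⟫ = 0}` (with positive weights `cᵢ`) are in equilibrium, then so
are the horizontal forces `fᵢ ŝᵢ` applied at the same points. -/
theorem statement8 {n l : ℕ} (hn : 2 ≤ n)
    (en : Euc n) (hen : en = EuclideanSpace.single (⟨n - 1, by omega⟩ : Fin n) 1)
    (sh : Fin l → Euc n) (hsh : ∀ i, ⟪sh i, en⟫ = 0)
    (f : Fin l → ℝ) (c : Fin l → ℝ)
    (h2 : ∑ i, (c i * f i) • wedge (sh i) en = 0) :
    (∑ i, (c i * f i) • sh i = 0) ∧
    (∑ i, c i • wedge (sh i) (f i • sh i) = 0) := by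
  constructor
  · have hen0 : en ≠ 0 := by simp [hen]
    have hinner : ⟪∑ i, (c i * f i) • sh i, en⟫ = 0 := by
      simp [sum_inner, inner_smul_left, hsh]
    exact eq_zero_of_wedge_eq_zero hen0 (sum_smul_wedge_left _ _ _ _ ▸ h2) hinner
  · simp [wedge_smul_right, wedge_self]

end
end

section
/- For all real numbers α, β with 0 < α < π/2 and 0 < β < π/2, one has (π − α − β) · sin α · sin β < sin(α + β). -/
open Real

lemma key {x : ℝ} (h0 : 0 < x) (h : x < π / 2) :
    (π / 2 - x) * Real.sin x < Real.cos x := by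
  have hy0 : 0 < π / 2 - x := by linarith
  have hy : π / 2 - x < π / 2 := by linarith
  have ht := Real.lt_tan hy0 hy
  rw [Real.tan_eq_sin_div_cos, Real.sin_pi_div_two_sub, Real.cos_pi_div_two_sub] at ht
  have hs : 0 < Real.sin x := Real.sin_pos_of_pos_of_lt_pi h0 (by linarith [Real.pi_pos])
  calc (π / 2 - x) * Real.sin x < (Real.cos x / Real.sin x) * Real.sin x := by
        exact mul_lt_mul_of_pos_right ht hs
    _ = Real.cos x := by field_simp

/-- Case 1 of three springs: both angles acute. -/
theorem statement13 (α β : ℝ) (hα0 : 0 < α) (hα : α < π / 2) (hβ0 : 0 < β) (hβ : β < π / 2) :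
    (π - α - β) * Real.sin α * Real.sin β < Real.sin (α + β) := by
  have h1 := key hα0 hα
  have h2 := key hβ0 hβ
  have hsa : 0 < Real.sin α := Real.sin_pos_of_pos_of_lt_pi hα0 (by linarith [Real.pi_pos])
  have hsb : 0 < Real.sin β := Real.sin_pos_of_pos_of_lt_pi hβ0 (by linarith [Real.pi_pos])
  rw [Real.sin_add]
  nlinarith [mul_lt_mul_of_pos_right h1 hsb, mul_lt_mul_of_pos_right h2 hsa]
end

section
/- For all real numbers α, β with 0 < α, 0 < β, and α + β < π/2, one has cos α · sin β · (π/2 − α − β) < cos(α + β). -/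
open Real

/-- Case 3 of three springs: one obtuse angle. -/
theorem statement15 (α β : ℝ) (hα0 : 0 < α) (hβ0 : 0 < β) (hαβ : α + β < π / 2) :
    Real.cos α * Real.sin β * (π / 2 - α - β) < Real.cos (α + β) := by
  set γ := π / 2 - α - β with hγ
  have hγ0 : 0 < γ := by simp [hγ]; linarith
  have hγ2 : γ < π / 2 := by
    have := Real.pi_pos; simp [hγ]; linarith
  have htan : γ < Real.tan γ := Real.lt_tan hγ0 hγ2
  have hcosγ : 0 < Real.cos γ := Real.cos_pos_of_mem_Ioo ⟨by linarith, hγ2⟩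
  have h1 : γ * Real.cos γ < Real.sin γ := by
    have := (lt_div_iff₀ hcosγ).mp (htan.trans_eq (Real.tan_eq_sin_div_cos γ))
    linarith
  have hsinγ : Real.sin γ = Real.cos (α + β) := by
    rw [hγ, show π / 2 - α - β = π / 2 - (α + β) by ring, Real.sin_pi_div_two_sub]
  have hcosγ' : Real.cos γ = Real.sin (α + β) := by
    rw [hγ, show π / 2 - α - β = π / 2 - (α + β) by ring, Real.cos_pi_div_two_sub]
  have h2 : Real.cos α * Real.sin β < Real.sin (α + β) := by
    rw [Real.sin_add]
    have hsα : 0 < Real.sin α := Real.sin_pos_of_pos_of_lt_pi hα0 (by linarith [Real.pi_pos])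
    have hcβ : 0 < Real.cos β := Real.cos_pos_of_mem_Ioo ⟨by linarith [Real.pi_pos], by linarith⟩
    nlinarith
  calc Real.cos α * Real.sin β * γ < Real.sin (α + β) * γ := by
        apply mul_lt_mul_of_pos_right h2 hγ0
    _ = γ * Real.cos γ := by rw [hcosγ']; ring
    _ < Real.sin γ := h1
    _ = Real.cos (α + β) := hsinγ
end

section
/- For all real numbers β with 0 < β < π/2, one has (π − 2β + cos β) · sin β < 3 cos β. -/
open Real

/-- The four-springs inequality. -/
theorem statement16 (β : ℝ) (hβ0 : 0 < β) (hβ : β < π / 2) :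
    (π - 2 * β + Real.cos β) * Real.sin β < 3 * Real.cos β := by
  set t := π / 2 - β with ht
  have ht0 : 0 < t := by simp [ht]; linarith
  have ht2 : t < π / 2 := by simp [ht]; linarith [Real.pi_pos]
  have hct : 0 < Real.cos t := Real.cos_pos_of_mem_Ioo ⟨by linarith [Real.pi_pos], ht2⟩
  have htan := Real.lt_tan ht0 ht2
  rw [Real.tan_eq_sin_div_cos, lt_div_iff₀ hct] at htan
  have hst : Real.sin t = Real.cos β := by rw [ht, Real.sin_pi_div_two_sub]
  have hctb : Real.cos t = Real.sin β := by rw [ht, Real.cos_pi_div_two_sub]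
  have h2t : π - 2 * β = 2 * t := by rw [ht]; ring
  have h1 : (π - 2 * β) * Real.sin β < 2 * Real.cos β := by
    rw [hst, hctb] at htan; rw [h2t]; nlinarith
  have hcb : 0 < Real.cos β := Real.cos_pos_of_mem_Ioo ⟨by linarith [Real.pi_pos], hβ⟩
  have hsb1 : Real.sin β < 1 := by
    have := Real.sin_lt_sin_of_lt_of_le_pi_div_two (by linarith : -(π/2) ≤ β) (le_refl (π/2)) hβ
    rwa [Real.sin_pi_div_two] at this
  nlinarith
end
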